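/- arXiv:1108.0692 — 5 statements merged into one kernel-verified Lean document; each statement's English description precedes it below -/
import Mathlib

section
/- Let G be a group and A an abelian normal subgroup of G. Let t, u ∈ G with tu = ut, and let a, b ∈ A. Then for every c ≥ 1, the Malcev words satisfy β_c(ta, ub)⁻¹ · α_c(ta, ub) = a^{f_c(u,t)} · b^{−f_c(t,u)}, where f_c is evaluated at the conjugation automorphisms induced by t and u on A. -/
/-- Malcev word pair `(α_c, β_c)`. -/
def malcevPair {G : Type*} [Monoid G] (c : ℕ) (x y : G) : G × G :=
  Nat.rec (x, y) (fun _ p => (p.1 * p.2, p.2 * p.1)) c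

/-- The Malcev word `α_c(x,y)`. -/
def malcevAlpha {G : Type*} [Monoid G] (c : ℕ) (x y : G) : G := (malcevPair c x y).1

/-- The Malcev word `β_c(x,y)`. -/
def malcevBeta {G : Type*} [Monoid G] (c : ℕ) (x y : G) : G := (malcevPair c x y).2

/-- The evaluation of `f_c(X,Y) = (X-1)·∏_{i=0}^{c-2}(X^{2^i}Y^{2^i}-1)` at two
elements of a (possibly noncommutative) ring. -/
def fEval {R : Type*} [Ring R] (c : ℕ) (t u : R) : R :=
  (t - 1) * ((List.range (c - 1)).map fun i => t ^ 2 ^ i * u ^ 2 ^ i - 1).prod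

/-- The endomorphism of the abelian normal subgroup `A` (written additively)
induced by conjugation by `t`, i.e. `a ↦ a^t = t⁻¹ * a * t`. -/
def conjEnd {G : Type*} [Group G] (A : Subgroup G) [hN : A.Normal] [IsMulCommutative A]
    (t : G) : AddMonoid.End (Additive A) :=
  AddMonoidHom.mk'
    (fun a => Additive.ofMul (⟨t⁻¹ * ((Additive.toMul a : A) : G) * t, by
      simpa using hN.conj_mem _ (Additive.toMul a).2 t⁻¹⟩ : A))
    (fun a b => congrArg Additive.ofMul (Subtype.ext (by
      show t⁻¹ * ((Additive.toMul a * Additive.toMul b : A) : G) * t = _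
      simp only [toMul_ofMul, Subgroup.coe_mul]
      group)))

open scoped IsMulCommutative

/-!
Write `T`, `U` for conjugation by `t`, `u` on `A`, written additively. For `c ≥ 1` both
`α_c(ta, ub)` and `β_c(ta, ub)` lie in the coset `(tu)^(2^(c-1)) A`, so `d_c = β_c⁻¹ α_c` lies
in `A` and `β_c` acts on `A` as `(TU)^(2^(c-1))`. Since
`β_(c+1)⁻¹ α_(c+1) = (β_c α_c)⁻¹ (α_c β_c) = d_c⁻¹ · β_c⁻¹ d_c β_c`, additively
`d_(c+1) = ((TU)^(2^(c-1)) - 1) d_c`, which is exactly how `f_(c+1)` arises from `f_c`.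
The base case `d_1 = (U - 1) a - (T - 1) b` is a direct computation using `tu = ut`.
-/

namespace AddMonoid.End

variable {M : Type*} [AddCommGroup M] (f g : AddMonoid.End M) (x : M)

lemma sub_apply : (f - g) x = f x - g x := rfl

lemma neg_apply : (-f) x = -f x := rfl

lemma mul_apply : (f * g) x = f (g x) := rfl

end AddMonoid.End

section MalcevWords

variable {M : Type*} [Monoid M] (x y : M)

lemma malcevAlpha_succ (c : ℕ) :
    malcevAlpha (c + 1) x y = malcevAlpha c x y * malcevBeta c x y := rfl

lemma malcevBeta_succ (c : ℕ) :
    malcevBeta (c + 1) x y = malcevBeta c x y * malcevAlpha c x y := rfl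

end MalcevWords

section FEval

variable {R : Type*} [Ring R] {X Y : R}

@[simp]
lemma fEval_one : fEval 1 X Y = X - 1 := by
  simp [fEval]

lemma fEval_add_two (n : ℕ) :
    fEval (n + 2) X Y = fEval (n + 1) X Y * (X ^ 2 ^ n * Y ^ 2 ^ n - 1) := by
  rw [fEval, fEval, show n + 2 - 1 = n + 1 from rfl, Nat.add_sub_cancel, List.range_succ,
    List.map_append, List.prod_append, List.map_singleton, List.prod_singleton, mul_assoc]

lemma Commute.fEval_right {Z : R} (hX : Commute Z X) (hY : Commute Z Y) (c : ℕ) :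
    Commute Z (fEval c X Y) := by
  refine (hX.sub_right (.one_right Z)).mul_right (Commute.list_prod_right _ _ fun F hF => ?_)
  obtain ⟨i, -, rfl⟩ := List.mem_map.1 hF
  exact ((hX.pow_right _).mul_right (hY.pow_right _)).sub_right (.one_right Z)

lemma Commute.fEval_add_two (hXY : Commute X Y) (n : ℕ) :
    fEval (n + 2) X Y = ((X * Y) ^ 2 ^ n - 1) * fEval (n + 1) X Y := by
  rw [_root_.fEval_add_two, ← hXY.mul_pow]
  have hX : Commute ((X * Y) ^ 2 ^ n - 1) X :=
    (((Commute.refl X).mul_left hXY.symm).pow_left _).sub_left (.one_left X)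
  have hY : Commute ((X * Y) ^ 2 ^ n - 1) Y :=
    ((hXY.mul_left (.refl Y)).pow_left _).sub_left (.one_left Y)
  exact (hX.fEval_right hY _).eq.symm

end FEval

section ConjEnd

variable {G : Type*} [Group G] (A : Subgroup G) [A.Normal] [IsMulCommutative A]

lemma conjEnd_apply (g : G) (p : Additive A) :
    ((Additive.toMul (conjEnd A g p) : A) : G) = g⁻¹ * ((Additive.toMul p : A) : G) * g := rfl

lemma conjEnd_mul (g h : G) : conjEnd A (g * h) = conjEnd A h * conjEnd A g := by
  ext p
  simp only [AddMonoid.End.coe_mul, Function.comp_apply, conjEnd_apply]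
  group

lemma conjEnd_coe (a : A) : conjEnd A a = 1 := by
  ext p
  rw [conjEnd_apply, AddMonoid.End.coe_one, id, ← Subgroup.coe_inv, ← Subgroup.coe_mul,
    mul_comm, ← Subgroup.coe_mul, inv_mul_cancel_right]

lemma conjEnd_mul_coe (g : G) (a : A) : conjEnd A (g * a) = conjEnd A g := by
  rw [conjEnd_mul, conjEnd_coe, one_mul]

lemma Commute.conjEnd {g h : G} (hgh : Commute g h) : Commute (conjEnd A g) (conjEnd A h) := by
  rw [Commute, SemiconjBy, ← conjEnd_mul, ← conjEnd_mul, hgh.eq]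

lemma conjEnd_sub_one_apply (g : G) (p : Additive A) :
    ((Additive.toMul ((conjEnd A g - 1) p) : A) : G) =
      ((Additive.toMul p : A) : G)⁻¹ * (g⁻¹ * ((Additive.toMul p : A) : G) * g) := by
  rw [AddMonoid.End.sub_apply, AddMonoid.End.coe_one, id, toMul_sub, div_eq_mul_inv, mul_comm,
    Subgroup.coe_mul, Subgroup.coe_inv, conjEnd_apply]

lemma inv_mul_swap_eq_conjEnd_sub_one_apply {g h : G} {p : Additive A}
    (hp : h⁻¹ * g = ((Additive.toMul p : A) : G)) :
    (h * g)⁻¹ * (g * h) = ((Additive.toMul ((conjEnd A h - 1) p) : A) : G) := by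
  rw [conjEnd_sub_one_apply, ← hp]
  group

lemma conjEnd_malcev_succ {x y : G} (hxy : Commute (conjEnd A x) (conjEnd A y)) (n : ℕ) :
    conjEnd A (malcevAlpha (n + 1) x y) = (conjEnd A x * conjEnd A y) ^ 2 ^ n ∧
      conjEnd A (malcevBeta (n + 1) x y) = (conjEnd A x * conjEnd A y) ^ 2 ^ n := by
  induction n with
  | zero =>
    rw [pow_zero, pow_one]
    exact ⟨(conjEnd_mul A x y).trans hxy.eq.symm, conjEnd_mul A y x⟩
  | succ n ih =>
    have hsq : (conjEnd A x * conjEnd A y) ^ 2 ^ (n + 1) =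
        (conjEnd A x * conjEnd A y) ^ 2 ^ n * (conjEnd A x * conjEnd A y) ^ 2 ^ n := by
      rw [pow_succ, pow_mul, sq]
    rw [malcevAlpha_succ _ _ (n + 1), malcevBeta_succ _ _ (n + 1), conjEnd_mul, conjEnd_mul, ih.1,
      ih.2, hsq]
    exact ⟨rfl, rfl⟩

lemma malcevBeta_inv_mul_malcevAlpha_one {t u : G} (htu : Commute t u) (a b : A) :
    (malcevBeta 1 (t * a) (u * b))⁻¹ * malcevAlpha 1 (t * a) (u * b) =
      ((Additive.toMul ((conjEnd A u - 1) (Additive.ofMul a) -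
        (conjEnd A t - 1) (Additive.ofMul b)) : A) : G) := by
  have hD : (conjEnd A u - 1) (Additive.ofMul a) - (conjEnd A t - 1) (Additive.ofMul b) =
      -Additive.ofMul a + -conjEnd A t (Additive.ofMul b) + conjEnd A u (Additive.ofMul a) +
        Additive.ofMul b := by
    simp only [AddMonoid.End.sub_apply, AddMonoid.End.coe_one, id]
    abel
  have hut : u⁻¹ * t * u = t := by rw [mul_assoc, htu.eq, inv_mul_cancel_left]
  rw [hD]
  simp only [toMul_add, toMul_neg, toMul_ofMul, Subgroup.coe_mul, Subgroup.coe_inv, conjEnd_apply]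
  calc (u * b * (t * a))⁻¹ * (t * a * (u * b))
      = (a : G)⁻¹ * (t⁻¹ * b * t)⁻¹ * (t⁻¹ * (u⁻¹ * t * u)) * (u⁻¹ * a * u) * b := by group
    _ = (a : G)⁻¹ * (t⁻¹ * b * t)⁻¹ * (u⁻¹ * a * u) * b := by rw [hut, inv_mul_cancel, mul_one]

lemma malcevBeta_inv_mul_malcevAlpha_succ {t u : G} (htu : Commute t u) (a b : A) (n : ℕ) :
    (malcevBeta (n + 1) (t * a) (u * b))⁻¹ * malcevAlpha (n + 1) (t * a) (u * b) =
      ((Additive.toMul (fEval (n + 1) (conjEnd A u) (conjEnd A t) (Additive.ofMul a) -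
        fEval (n + 1) (conjEnd A t) (conjEnd A u) (Additive.ofMul b)) : A) : G) := by
  induction n with
  | zero => simpa using malcevBeta_inv_mul_malcevAlpha_one A htu a b
  | succ n ih =>
    have hTU := htu.conjEnd A
    have hβ : conjEnd A (malcevBeta (n + 1) (t * a) (u * b)) =
        (conjEnd A t * conjEnd A u) ^ 2 ^ n := by
      simpa only [conjEnd_mul_coe] using (conjEnd_malcev_succ A (x := t * a) (y := u * b)
        (by simpa only [conjEnd_mul_coe] using hTU) n).2
    rw [malcevAlpha_succ, malcevBeta_succ, inv_mul_swap_eq_conjEnd_sub_one_apply A ih, hβ,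
      map_sub, ← AddMonoid.End.mul_apply, ← AddMonoid.End.mul_apply, ← hTU.fEval_add_two,
      hTU.eq, ← hTU.symm.fEval_add_two]

end ConjEnd

theorem malcev_word_substitution_formula
    {G : Type*} [Group G] (A : Subgroup G) [A.Normal] [IsMulCommutative A]
    (t u : G) (htu : t * u = u * t) (a b : A) (c : ℕ) (hc : 1 ≤ c) :
    (malcevBeta c (t * (a : G)) (u * (b : G)))⁻¹ * malcevAlpha c (t * (a : G)) (u * (b : G)) =
      ((Additive.toMul (fEval c (conjEnd A u) (conjEnd A t) (Additive.ofMul a)) : A) : G) *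
          ((Additive.toMul ((-fEval c (conjEnd A t) (conjEnd A u)) (Additive.ofMul b)) : A) : G) := by
  obtain ⟨n, rfl⟩ := Nat.exists_eq_add_of_le' hc
  rw [malcevBeta_inv_mul_malcevAlpha_succ A htu, AddMonoid.End.neg_apply, sub_eq_add_neg,
    toMul_add, Subgroup.coe_mul]
end

section
/- Let G be a nilpotent group of class at most k, let A be a torsion-free abelian normal subgroup of G, and let φ be the automorphism of A induced by conjugation by some element of G. Then for every polynomial j(X) ∈ ℤ[X] coprime to X − 1 in ℚ[X], the endomorphism j(φ) of A is injective. -/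
open scoped IsMulCommutative

/-- A monoid is torsion-free if no nontrivial elements have finite order
(the definition `Monoid.IsTorsionFree` of the older Mathlib, since removed). -/
def Monoid.IsTorsionFree (G : Type*) [Monoid G] : Prop :=
  ∀ g : G, g ≠ 1 → ¬IsOfFinOrder g

/-!
Conjugation by `g` acts on `A` as `φ`, and `φ - 1` maps an element of the `(m + 1)`-st term of the
upper central series to a commutator in the `m`-th term, so `(φ - 1) ^ k = 0`. The integer
`n = j(1)` is nonzero because `j` is coprime to `X - 1`, and since `j ≡ n` modulo `X - 1`, `n ^ k`
lies in the ideal `(j, (X - 1) ^ k)` of `ℤ[X]`. Evaluating at `φ` gives `n ^ k = u(φ) * j(φ)`,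
so the kernel of `j(φ)` is annihilated by `n ^ k` and is trivial because `A` is torsion-free.
-/

open Polynomial

open scoped commutatorElement

section ConjEnd

variable {G : Type*} [Group G] (A : Subgroup G) [A.Normal] [IsMulCommutative A]

lemma coe_toMul_conjEnd_apply (g : G) (a : Additive A) :
    ((Additive.toMul (conjEnd A g a) : A) : G) = g⁻¹ * ((Additive.toMul a : A) : G) * g :=
  rfl

lemma coe_toMul_conjEnd_sub_one_apply (g : G) (a : Additive A) :
    ((Additive.toMul ((conjEnd A g - 1) a) : A) : G) = ⁅g⁻¹, ((Additive.toMul a : A) : G)⁆ := by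
  rw [show (conjEnd A g - 1) a = conjEnd A g a - a from rfl, toMul_sub,
    Subgroup.coe_div, coe_toMul_conjEnd_apply, commutatorElement_def, div_eq_mul_inv, inv_inv]

lemma conjEnd_sub_one_pow_apply_eq_zero (g : G) {m : ℕ} {a : Additive A}
    (ha : ((Additive.toMul a : A) : G) ∈ Subgroup.upperCentralSeries G m) :
    ((conjEnd A g - 1) ^ m) a = 0 := by
  induction m generalizing a with
  | zero =>
    simpa using ha
  | succ m ih =>
    rw [pow_succ, AddMonoid.End.coe_mul, Function.comp_apply]
    apply ih
    rw [coe_toMul_conjEnd_sub_one_apply, ← commutatorElement_inv]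
    exact inv_mem (Subgroup.mem_upperCentralSeries_succ_iff.mp ha g⁻¹)

lemma conjEnd_sub_one_pow_eq_zero {k : ℕ} (hG : Subgroup.upperCentralSeries G k = ⊤) (g : G) :
    (conjEnd A g - 1) ^ k = 0 :=
  AddMonoidHom.ext fun _ => conjEnd_sub_one_pow_apply_eq_zero A g (hG ▸ Subgroup.mem_top _)

end ConjEnd

lemma Monoid.IsTorsionFree.eq_one_of_zpow_eq_one {H : Type*} [Group H]
    (hH : Monoid.IsTorsionFree H) {h : H} {n : ℤ} (hn : n ≠ 0) (hpow : h ^ n = 1) : h = 1 := by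
  by_contra hne
  exact hH h hne (isOfFinOrder_iff_zpow_eq_one.mpr ⟨n, hn, hpow⟩)

namespace Polynomial

lemma exists_C_eval_pow_eq {R : Type*} [CommRing R] (p : R[X]) (a : R) (k : ℕ) :
    ∃ u v : R[X], C (p.eval a) ^ k = u * p + v * (X - C a) ^ k := by
  have hdvd : X - C a ∣ C (p.eval a) - p := dvd_sub_comm.mp X_sub_C_dvd_sub_C_eval
  obtain ⟨v, hv⟩ := pow_dvd_pow_of_dvd hdvd k
  obtain ⟨u, hu⟩ := sub_dvd_pow_sub_pow (C (p.eval a)) (C (p.eval a) - p) k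
  exact ⟨u, v, by rw [sub_sub_cancel] at hu; linear_combination hu + hv⟩

lemma eval_one_ne_zero_of_isCoprime_map {R S : Type*} [CommRing R] [CommRing S] [Nontrivial S]
    (f : R →+* S) {p : R[X]} (h : IsCoprime (p.map f) (X - 1)) : p.eval 1 ≠ 0 := by
  intro hp
  simpa [eval_map_apply, hp] using aeval_ne_zero_of_isCoprime h (1 : S)

end Polynomial

theorem aeval_conjEnd_injective_of_coprime
    {G : Type*} [Group G] (k : ℕ) (hG : upperCentralSeries G k = ⊤)
    (A : Subgroup G) [A.Normal] [IsMulCommutative A]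
    (hA : Monoid.IsTorsionFree A) (g : G)
    (j : Polynomial ℤ)
    (hj : IsCoprime (j.map (Int.castRingHom ℚ)) (Polynomial.X - 1)) :
    Function.Injective (Polynomial.aeval (conjEnd A g) j) := by
  have hn : j.eval 1 ≠ 0 := eval_one_ne_zero_of_isCoprime_map _ hj
  obtain ⟨u, v, huv⟩ := exists_C_eval_pow_eq j 1 k
  have hnk : ((j.eval 1 ^ k : ℤ) : AddMonoid.End (Additive A))
      = aeval (conjEnd A g) u * aeval (conjEnd A g) j := by
    simpa [conjEnd_sub_one_pow_eq_zero A hG g] using congrArg (aeval (conjEnd A g)) huv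
  rw [injective_iff_map_eq_zero]
  intro a ha
  have hsmul : (j.eval 1 ^ k) • a = 0 := by
    rw [← AddMonoid.End.intCast_apply, hnk, AddMonoid.End.coe_mul, Function.comp_apply, ha,
      map_zero]
  have hpow : Additive.toMul a ^ (j.eval 1 ^ k) = 1 := by rw [← toMul_zsmul, hsmul, toMul_zero]
  exact toMul_eq_one.mp (hA.eq_one_of_zpow_eq_one (pow_ne_zero k hn) hpow)
end

section
/- Let n ≥ c ≥ 3 be integers, let 𝔠 be the monomial ideal of ℚ[X_1, …, X_n] generated by all monomials X_1^{i_1}⋯X_n^{i_n} with i_1 + ⋯ + i_n = c and i_j ≥ 2 for some j, and let e ≥ 1 be an integer. Then ((X_1+1)^e·(X_2+1)^e⋯(X_n+1)^e − 1)^n ≡ e^n·n!·X_1X_2⋯X_n (mod 𝔠). -/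
open MvPolynomial

/-- The monomial ideal of `ℚ[X_1,…,X_n]` generated by all monomials
`X_1^{i_1}⋯X_n^{i_n}` with `i_1+⋯+i_n = c` and `i_j ≥ 2` for some `j`. -/
noncomputable def cIdeal (n c : ℕ) : Ideal (MvPolynomial (Fin n) ℚ) :=
  Ideal.span {m | ∃ d : Fin n → ℕ, (∑ i, d i) = c ∧ (∃ j, 2 ≤ d j) ∧
    m = ∏ i, X i ^ d i}

/-!
Let `𝔪` be the ideal generated by the variables. Modulo `𝔪²`, `∏ (X_i + 1)^e - 1` is
`e • ∑ X_i`, and both lie in `𝔪`, so their `n`-th powers agree modulo `𝔪^(n+1)`. A monomial of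
degree `n + 1` in `n` variables repeats a variable, so `𝔪^(n+1) ⊆ 𝔠`. Finally, in the expansion
of `(∑ X_i)^n` over maps `Fin n → Fin n`, the non-injective maps give monomials of degree `n`
with a repeated variable, hence in `𝔠`, and the `n!` bijections each give `X_1⋯X_n`.
-/

namespace Ideal

variable {R : Type*} [CommRing R] (I : Ideal R)

theorem prod_one_add_sub_one_sub_sum_mem_sq {ι : Type*} (s : Finset ι) {u : ι → R}
    (hu : ∀ i ∈ s, u i ∈ I) : ∏ i ∈ s, (1 + u i) - 1 - ∑ i ∈ s, u i ∈ I ^ 2 := by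
  classical
  induction s using Finset.induction with
  | empty => simp
  | insert a s ha ih =>
    have hs : ∀ i ∈ s, u i ∈ I := fun i hi => hu i (Finset.mem_insert_of_mem hi)
    have hua : u a ∈ I := hu a (Finset.mem_insert_self a s)
    have hprod : ∏ i ∈ s, (1 + u i) - 1 ∈ I := by
      simpa using I.add_mem (I.pow_le_self two_ne_zero (ih hs)) (I.sum_mem hs)
    rw [Finset.prod_insert ha, Finset.sum_insert ha]
    have hsplit : (1 + u a) * ∏ i ∈ s, (1 + u i) - 1 - (u a + ∑ i ∈ s, u i) =
        (∏ i ∈ s, (1 + u i) - 1 - ∑ i ∈ s, u i) + u a * (∏ i ∈ s, (1 + u i) - 1) := by ring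
    rw [hsplit]
    exact add_mem (ih hs) (by rw [sq]; exact Ideal.mul_mem_mul hua hprod)

theorem pow_sub_pow_mem_pow_succ {a b : R} (ha : a ∈ I) (hb : b ∈ I) (hab : a - b ∈ I ^ 2)
    (n : ℕ) : a ^ n - b ^ n ∈ I ^ (n + 1) := by
  rcases n with _ | n
  · simp
  rw [← Commute.geom_sum₂_mul (Commute.all a b), show n + 1 + 1 = n + 2 by ring, pow_add]
  refine Ideal.mul_mem_mul (Ideal.sum_mem _ fun i hi => ?_) hab
  have hi : i + (n + 1 - 1 - i) = n := by simp at hi; omega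
  simpa only [← pow_add, hi] using
    Ideal.mul_mem_mul (I.pow_mem_pow ha i) (I.pow_mem_pow hb (n + 1 - 1 - i))

end Ideal


open Finsupp

theorem Finsupp.exists_le_le_degree_eq {σ : Type*} {d₀ m : σ →₀ ℕ} (h : d₀ ≤ m) {k : ℕ}
    (hk₀ : degree d₀ ≤ k) (hk : k ≤ degree m) : ∃ d, d₀ ≤ d ∧ d ≤ m ∧ degree d = k := by
  induction k, hk₀ using Nat.le_induction with
  | base => exact ⟨d₀, le_rfl, h, rfl⟩
  | succ k _ ih =>
    obtain ⟨d, hd₀, hdm, rfl⟩ := ih (by omega)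
    obtain ⟨i, hi⟩ : ∃ i, d i < m i := by
      by_contra! hmd
      have : degree m ≤ degree d := degree_mono fun i => hmd i
      omega
    refine ⟨d + single i 1, hd₀.trans le_self_add, fun j => ?_, by simp [degree_single]⟩
    rcases eq_or_ne i j with rfl | hij
    · simpa using hi
    · simpa [single_eq_of_ne' hij] using hdm j

theorem cIdeal_eq_span_monomial (n c : ℕ) :
    cIdeal n c = Ideal.span ((monomial · 1) '' {d | degree d = c ∧ ∃ j, 2 ≤ d j}) := by
  rw [cIdeal]
  congr 1
  ext p
  constructor
  · rintro ⟨d, hdc, hdj, rfl⟩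
    refine ⟨equivFunOnFinite.symm d, ⟨by simpa [degree_eq_sum] using hdc, hdj⟩, ?_⟩
    simp [monomial_eq, Finsupp.prod_fintype]
  · rintro ⟨d, ⟨hdc, hdj⟩, rfl⟩
    exact ⟨d, by simpa [degree_eq_sum] using hdc, hdj, by simp [monomial_eq, Finsupp.prod_fintype]⟩

theorem mem_cIdeal_of_forall_mem_support {n c : ℕ} (hc : 2 ≤ c) {p : MvPolynomial (Fin n) ℚ}
    (hp : ∀ m ∈ p.support, c ≤ degree m ∧ ∃ j, 2 ≤ m j) : p ∈ cIdeal n c := by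
  rw [cIdeal_eq_span_monomial, mem_ideal_span_monomial_image]
  intro m hm
  obtain ⟨hcm, j, hj⟩ := hp m hm
  obtain ⟨d, hjd, hdm, hdc⟩ := exists_le_le_degree_eq (single_le_iff.mpr hj)
    (by simpa [degree_single]) hcm
  exact ⟨d, ⟨hdc, j, by simpa using hjd j⟩, hdm⟩

theorem pow_idealOfVars_le_cIdeal {n c : ℕ} (hc : 2 ≤ c) (hn : c ≤ n + 1) :
    idealOfVars (Fin n) ℚ ^ (n + 1) ≤ cIdeal n c := by
  intro p hp
  refine mem_cIdeal_of_forall_mem_support hc fun m hm => ?_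
  have hdeg : n + 1 ≤ degree m := (mem_pow_idealOfVars_iff _ p).mp hp m hm
  refine ⟨hn.trans hdeg, ?_⟩
  obtain ⟨j, -, hj⟩ := Finset.exists_lt_of_sum_lt (s := Finset.univ) (f := fun _ => 1) (g := m)
    (by simpa [degree_eq_sum] using hdeg)
  exact ⟨j, hj⟩

theorem prod_X_comp_mem_cIdeal {ι : Type*} [Fintype ι] {n c : ℕ} (hc : 2 ≤ c)
    (hι : c ≤ Fintype.card ι) {g : ι → Fin n} (hg : ¬ g.Injective) :
    ∏ j, (X (g j) : MvPolynomial (Fin n) ℚ) ∈ cIdeal n c := by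
  classical
  obtain ⟨a, b, hab, hne⟩ := Function.not_injective_iff.mp hg
  have hmono : ∏ j, (X (g j) : MvPolynomial (Fin n) ℚ) = monomial (∑ j, single (g j) 1) 1 := by
    simp only [X, ← monomial_sum_one]
  rw [hmono]
  refine mem_cIdeal_of_forall_mem_support hc fun m hm => ?_
  rw [support_monomial, if_neg one_ne_zero, Finset.mem_singleton] at hm
  subst hm
  refine ⟨by simpa [degree_single] using hι, g a, ?_⟩
  calc 2 = ∑ j ∈ {a, b}, single (g j) 1 (g a) := by simp [Finset.sum_pair hne, hab]
    _ ≤ ∑ j, single (g j) 1 (g a) := Finset.sum_le_sum_of_subset (Finset.subset_univ _)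
    _ = (∑ j, single (g j) 1) (g a) := (finsetSum_apply ..).symm

theorem sum_X_pow_sub_factorial_mul_prod_X_mem_cIdeal {n c : ℕ} (hc : 2 ≤ c) (hn : c ≤ n) :
    (∑ i, (X i : MvPolynomial (Fin n) ℚ)) ^ n - (n.factorial : MvPolynomial (Fin n) ℚ) * ∏ i, X i
      ∈ cIdeal n c := by
  classical
  have hinj : ∑ g : Fin n → Fin n with g.Injective, ∏ j, (X (g j) : MvPolynomial (Fin n) ℚ) =
      (n.factorial : MvPolynomial (Fin n) ℚ) * ∏ i, X i := by
    rw [Finset.sum_congr rfl fun g hg => Fintype.prod_bijective g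
      (Finite.injective_iff_bijective.mp (Finset.mem_filter.mp hg).2) _ _ fun _ => rfl,
      Finset.sum_const, nsmul_eq_mul, ← Fintype.card_subtype,
      Fintype.card_congr (Equiv.subtypeInjectiveEquivEmbedding _ _), Fintype.card_embedding_eq,
      Fintype.card_fin, Nat.descFactorial_self]
  rw [Finset.sum_pow', Fintype.piFinset_univ,
    ← Finset.sum_filter_add_sum_filter_not _ Function.Injective, hinj, add_sub_cancel_left]
  exact Ideal.sum_mem _ fun g hg =>
    prod_X_comp_mem_cIdeal hc (by simpa using hn) (Finset.mem_filter.mp hg).2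

theorem prod_X_add_one_pow_sub_one_sub_mem_pow_idealOfVars {σ R : Type*} [Fintype σ] [CommRing R]
    (e : ℕ) : ∏ i, ((X i : MvPolynomial σ R) + 1) ^ e - 1 - (e : MvPolynomial σ R) * ∑ i, X i ∈
      idealOfVars σ R ^ 2 := by
  have hprod : ∏ i, ((X i : MvPolynomial σ R) + 1) ^ e = ∏ p : σ × Fin e, (1 + X p.1) := by
    simp [Fintype.prod_prod_type, add_comm]
  have hsum : (e : MvPolynomial σ R) * ∑ i, X i = ∑ p : σ × Fin e, X p.1 := by
    simp [Fintype.sum_prod_type, Finset.mul_sum]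
  rw [hprod, hsum]
  exact Ideal.prod_one_add_sub_one_sub_sum_mem_sq _ _ fun p _ => Ideal.subset_span ⟨p.1, rfl⟩

theorem congruence_mod_cIdeal_general (n c : ℕ) (hc : 3 ≤ c) (hn : c ≤ n) (e : ℕ) :
    ((∏ i, ((X i : MvPolynomial (Fin n) ℚ) + 1) ^ e) - 1) ^ n -
        (e : MvPolynomial (Fin n) ℚ) ^ n * (n.factorial : MvPolynomial (Fin n) ℚ) * ∏ i, X i ∈
      cIdeal n c := by
  set 𝔪 := idealOfVars (Fin n) ℚ
  set u := (e : MvPolynomial (Fin n) ℚ) * ∑ i, X i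
  have hu : u ∈ 𝔪 := Ideal.mul_mem_left _ _ (Ideal.sum_mem _ fun i _ => Ideal.subset_span ⟨i, rfl⟩)
  have hdiff : ∏ i, ((X i : MvPolynomial (Fin n) ℚ) + 1) ^ e - 1 - u ∈ 𝔪 ^ 2 :=
    prod_X_add_one_pow_sub_one_sub_mem_pow_idealOfVars e
  have hF : ∏ i, ((X i : MvPolynomial (Fin n) ℚ) + 1) ^ e - 1 ∈ 𝔪 := by
    simpa using 𝔪.add_mem (Ideal.pow_le_self two_ne_zero hdiff) hu
  have hhigh := pow_idealOfVars_le_cIdeal (c := c) (by omega) (by omega)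
    (𝔪.pow_sub_pow_mem_pow_succ hF hu hdiff n)
  have hlin := Ideal.mul_mem_left _ ((e : MvPolynomial (Fin n) ℚ) ^ n)
    (sum_X_pow_sub_factorial_mul_prod_X_mem_cIdeal (c := c) (by omega) hn)
  convert Ideal.add_mem _ hhigh hlin using 1
  ring

theorem congruence_mod_cIdeal (n c : ℕ) (hc : 3 ≤ c) (hn : c ≤ n) (e : ℕ) (he : 1 ≤ e) :
    ((∏ i, ((X i : MvPolynomial (Fin n) ℚ) + 1) ^ e) - 1) ^ n -
        (e : MvPolynomial (Fin n) ℚ) ^ n * (n.factorial : MvPolynomial (Fin n) ℚ) * ∏ i, X i ∈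
      cIdeal n c :=
  congruence_mod_cIdeal_general n c hc hn e
end

section
/- Let n ≥ c ≥ 3 be integers, let 𝔠 be the monomial ideal of ℚ[X_1, …, X_n] generated by all monomials X_1^{i_1}⋯X_n^{i_n} with i_1 + ⋯ + i_n = c and i_j ≥ 2 for some j, and let e ≥ 1 be an integer. Then ((X_1+1)^e·(X_2+1)^e⋯(X_n+1)^e − 1)^n ∉ 𝔠. -/
open MvPolynomial

/-!
Every generator of `cIdeal n c` is divisible by the square of a variable, so no element of the
ideal involves the squarefree monomial `X_1 ⋯ X_n`. On the other hand `g = ∏ (X_i + 1)^e - 1` has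
nonnegative coefficients, and the coefficient of `X_i` in it is `e > 0`. For polynomials with
nonnegative coefficients the coefficient of `a_1 + ⋯ + a_n` in `p_1 ⋯ p_n` is at least the product
of the coefficients of `a_k` in `p_k`; applied to `g ^ n` with `a_k = X_k` this gives a coefficient
`≥ e ^ n > 0` at `X_1 ⋯ X_n`.
-/

namespace MvPolynomial

theorem coeff_single_X_add_one_pow {σ R : Type*} [CommSemiring R] (i : σ) (k e : ℕ) :
    coeff (Finsupp.single i k) ((X i + 1 : MvPolynomial σ R) ^ e) = e.choose k := by
  classical
  simp_rw [add_pow, one_pow, mul_one, coeff_sum, ← C_eq_coe_nat, mul_comm _ (C _), coeff_C_mul,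
    coeff_X_pow]
  simp only [(Finsupp.single_injective i).eq_iff, mul_ite, mul_one, mul_zero, Finset.sum_ite_eq',
    Finset.mem_range]
  split_ifs with hk
  · rfl
  · rw [Nat.choose_eq_zero_of_lt (by omega), Nat.cast_zero]

theorem not_mem_span_X_sq_of_coeff_ne_zero {σ R : Type*} [CommSemiring R]
    {p : MvPolynomial σ R} {s : σ →₀ ℕ} (hs : ∀ i, s i ≤ 1) (hp : coeff s p ≠ 0) :
    p ∉ Ideal.span (Set.range fun i => (X i : MvPolynomial σ R) ^ 2) := by
  have hrange : (Set.range fun i => (X i : MvPolynomial σ R) ^ 2) =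
      (fun s => monomial s (1 : R)) '' Set.range fun i => Finsupp.single i 2 := by
    simp only [← Set.range_comp, Function.comp_def, X_pow_eq_monomial]
  rw [hrange, mem_ideal_span_monomial_image]
  push Not
  refine ⟨s, mem_support_iff.mpr hp, ?_⟩
  rintro _ ⟨i, rfl⟩ hle
  have := (hs i).trans' (hle i)
  simp at this

section OrderedSemiring

variable {σ R : Type*} [CommSemiring R] [PartialOrder R] [IsOrderedRing R]

def nonnegCoeffs : Subsemiring (MvPolynomial σ R) where
  carrier := {p | ∀ d, 0 ≤ coeff d p}
  zero_mem' d := by simp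
  add_mem' hp hq d := by simpa only [coeff_add] using add_nonneg (hp d) (hq d)
  one_mem' d := by classical rw [coeff_one]; split_ifs <;> simp
  mul_mem' {p q} hp hq d := by
    classical
    rw [coeff_mul]
    exact Finset.sum_nonneg fun x _ => mul_nonneg (hp _) (hq _)

theorem X_add_one_mem_nonnegCoeffs (i : σ) : (X i + 1 : MvPolynomial σ R) ∈ nonnegCoeffs :=
  add_mem (fun d => by classical rw [coeff_X]; split_ifs <;> simp) (one_mem _)

theorem coeff_mul_coeff_le_coeff_mul {p q : MvPolynomial σ R} (hp : p ∈ nonnegCoeffs)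
    (hq : q ∈ nonnegCoeffs) (a b : σ →₀ ℕ) :
    coeff a p * coeff b q ≤ coeff (a + b) (p * q) := by
  classical
  rw [coeff_mul]
  have hab : (a, b) ∈ Finset.HasAntidiagonal.antidiagonal (a + b) :=
    Finset.HasAntidiagonal.mem_antidiagonal.mpr rfl
  exact Finset.single_le_sum (f := fun x : (σ →₀ ℕ) × (σ →₀ ℕ) => coeff x.1 p * coeff x.2 q)
    (fun x _ => mul_nonneg (hp _) (hq _)) hab

theorem prod_coeff_le_coeff_prod {ι : Type*} (s : Finset ι) {p : ι → MvPolynomial σ R}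
    (hp : ∀ i ∈ s, p i ∈ nonnegCoeffs) (a : ι → σ →₀ ℕ) :
    ∏ i ∈ s, coeff (a i) (p i) ≤ coeff (∑ i ∈ s, a i) (∏ i ∈ s, p i) := by
  classical
  induction s using Finset.induction with
  | empty => simp
  | @insert i s hi ih =>
    rw [Finset.prod_insert hi, Finset.sum_insert hi, Finset.prod_insert hi]
    have hs : ∀ j ∈ s, p j ∈ nonnegCoeffs := fun j hj => hp j (Finset.mem_insert_of_mem hj)
    have hpi := hp i (Finset.mem_insert_self i s)
    calc coeff (a i) (p i) * ∏ j ∈ s, coeff (a j) (p j)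
        ≤ coeff (a i) (p i) * coeff (∑ j ∈ s, a j) (∏ j ∈ s, p j) :=
          mul_le_mul_of_nonneg_left (ih hs) (hpi _)
      _ ≤ _ := coeff_mul_coeff_le_coeff_mul hpi (Subsemiring.prod_mem _ hs) _ _

end OrderedSemiring

theorem sub_one_mem_nonnegCoeffs {σ R : Type*} [CommRing R] [PartialOrder R] [IsOrderedRing R]
    {p : MvPolynomial σ R} (hp : p ∈ nonnegCoeffs) (h0 : 1 ≤ constantCoeff p) :
    p - 1 ∈ nonnegCoeffs := by
  classical
  intro d
  rw [coeff_sub, coeff_one]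
  split_ifs with hd
  · exact sub_nonneg.mpr (hd ▸ h0)
  · simpa using hp d

theorem coeff_sum_single_one_pow_card_pos {σ R : Type*} [Fintype σ] [CommSemiring R]
    [PartialOrder R] [IsStrictOrderedRing R] {p : MvPolynomial σ R} (hp : p ∈ nonnegCoeffs)
    (hpos : ∀ i, 0 < coeff (Finsupp.single i 1) p) :
    0 < coeff (∑ i, Finsupp.single i 1) (p ^ Fintype.card σ) := by
  rw [← Finset.card_univ, ← Finset.prod_const]
  exact (Finset.prod_pos fun i _ => hpos i).trans_le
    (prod_coeff_le_coeff_prod _ (fun _ _ => hp) _)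

end MvPolynomial

section ProdXAddOnePow

variable {σ R : Type*} [Fintype σ] [CommRing R] [PartialOrder R] [IsOrderedRing R]

theorem prod_X_add_one_pow_sub_one_mem_nonnegCoeffs (e : ℕ) :
    (∏ i, (X i + 1 : MvPolynomial σ R) ^ e) - 1 ∈ nonnegCoeffs :=
  sub_one_mem_nonnegCoeffs
    (Subsemiring.prod_mem _ fun i _ => pow_mem (X_add_one_mem_nonnegCoeffs i) e)
    (by simp)

theorem coeff_single_one_prod_X_add_one_pow_sub_one_pos [Nontrivial R] {e : ℕ} (he : 1 ≤ e)
    (i : σ) :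
    0 < coeff (Finsupp.single i 1) ((∏ j, (X j + 1 : MvPolynomial σ R) ^ e) - 1) := by
  classical
  have hne : (0 : σ →₀ ℕ) ≠ Finsupp.single i 1 := (Finsupp.single_ne_zero.mpr one_ne_zero).symm
  rw [coeff_sub, coeff_one, if_neg hne, sub_zero]
  have hle := prod_coeff_le_coeff_prod Finset.univ
    (fun j _ => pow_mem (X_add_one_mem_nonnegCoeffs (R := R) j) e)
    (Pi.single i (Finsupp.single i 1))
  rw [Finset.sum_pi_single', if_pos (Finset.mem_univ i), Fintype.prod_eq_single i,
    Pi.single_eq_same, coeff_single_X_add_one_pow, Nat.choose_one_right] at hle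
  · exact (Nat.cast_pos.mpr he).trans_le hle
  · intro j hj
    rw [Pi.single_eq_of_ne hj, ← Finsupp.single_zero j, coeff_single_X_add_one_pow,
      Nat.choose_zero_right, Nat.cast_one]

end ProdXAddOnePow

theorem cIdeal_le_span_X_sq (n c : ℕ) :
    cIdeal n c ≤ Ideal.span (Set.range fun i => (X i : MvPolynomial (Fin n) ℚ) ^ 2) := by
  refine Ideal.span_le.mpr ?_
  rintro _ ⟨d, -, ⟨j, hj⟩, rfl⟩
  refine Ideal.mem_of_dvd _ ?_ (Ideal.subset_span ⟨j, rfl⟩)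
  exact (pow_dvd_pow _ hj).trans (Finset.dvd_prod_of_mem _ (Finset.mem_univ j))

theorem pow_not_mem_cIdeal_general (n c : ℕ) (e : ℕ) (he : 1 ≤ e) :
    ((∏ i, ((X i : MvPolynomial (Fin n) ℚ) + 1) ^ e) - 1) ^ n ∉ cIdeal n c := by
  have hpos := coeff_sum_single_one_pow_card_pos
    (prod_X_add_one_pow_sub_one_mem_nonnegCoeffs (σ := Fin n) (R := ℚ) e)
    (coeff_single_one_prod_X_add_one_pow_sub_one_pos he)
  rw [Fintype.card_fin] at hpos
  have hsqfree : ∀ j : Fin n, (∑ i, Finsupp.single i 1 : Fin n →₀ ℕ) j ≤ 1 := by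
    simp [Finsupp.finsetSum_apply, Finsupp.single_apply]
  exact fun h => not_mem_span_X_sq_of_coeff_ne_zero hsqfree hpos.ne' (cIdeal_le_span_X_sq n c h)

theorem pow_not_mem_cIdeal (n c : ℕ) (hc : 3 ≤ c) (hn : c ≤ n) (e : ℕ) (he : 1 ≤ e) :
    ((∏ i, ((X i : MvPolynomial (Fin n) ℚ) + 1) ^ e) - 1) ^ n ∉ cIdeal n c :=
  pow_not_mem_cIdeal_general n c e he
end

section
/- Let c ≥ 3 be a fixed integer. Then for every n ≥ c there exists a finitely generated nilpotent torsion-free group G_n which is a semidirect product B_n ⋉ A_n satisfying: (i) A_n and B_n are abelian (so G_n is metabelian); (ii) B_n is generated by n elements t_1, …, t_n such that the subset T_n = t_1A_n ∪ ⋯ ∪ t_nA_n ∪ A_n satisfies the Malcev law M_c(x,y); and (iii) for every integer e ≥ 1 the Malcev law M_n(x,y) fails for some substitution of two elements of the coset (t_1⋯t_n)^e A_n; in particular G_n does not satisfy M_n(x,y). -/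
open Pointwise

/-- A witness for Lemma 3.1: a finitely generated nilpotent torsion-free group
`G = B ⋉ A` (given internally: `A` normal, `A ⊓ B = ⊥`, `A ⊔ B = ⊤`) with `A`, `B`
abelian, `B` generated by `t 0, …, t (n-1)`, such that the union of cosets
`T = t₁A ∪ ⋯ ∪ tₙA ∪ A` satisfies the Malcev law `M_c`, while for every `e ≥ 1`
the law `M_n` fails for some substitution of two elements of the coset
`(t₁⋯tₙ)ᵉA`; in particular `G` does not satisfy `M_n`. -/
structure MalcevCounterexampleLevel (c n : ℕ) : Type 1 where
  G : Type
  [grp : Group G]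
  fg : Group.FG G
  nilpotent : Group.IsNilpotent G
  torsionFree : ∀ g : G, g ≠ 1 → ¬IsOfFinOrder g
  A : Subgroup G
  B : Subgroup G
  normalA : A.Normal
  inf_eq_bot : A ⊓ B = ⊥
  sup_eq_top : A ⊔ B = ⊤
  abelianA : ∀ x y : A, x * y = y * x
  abelianB : ∀ x y : B, x * y = y * x
  t : Fin n → G
  t_mem : ∀ i, t i ∈ B
  t_gen : Subgroup.closure (Set.range t) = B
  T_satisfies_Mc : ∀ x ∈ (⋃ i, t i • (A : Set G)) ∪ (A : Set G),
    ∀ y ∈ (⋃ i, t i • (A : Set G)) ∪ (A : Set G),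
      malcevAlpha c x y = malcevBeta c x y
  Mn_fails_on_coset : ∀ e : ℕ, 1 ≤ e →
    ∃ x ∈ ((List.ofFn t).prod ^ e) • (A : Set G),
      ∃ y ∈ ((List.ofFn t).prod ^ e) • (A : Set G),
        malcevAlpha n x y ≠ malcevBeta n x y
  not_Mn : ∃ x y : G, malcevAlpha n x y ≠ malcevBeta n x y

/-!
Take `G = A ⋊ ℤⁿ` with `A = ℤ[ε₁, …, εₙ] / (ε₁², …, εₙ²)` and `tᵢ` acting by multiplication by
`1 + εᵢ`. Every `t - 1` raises the `ε`-degree, so `G` is nilpotent; both factors are torsion-free,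
hence so is `G`.

Since `ℤⁿ` is abelian, `α_{k+1}(x, y)` and `β_{k+1}(x, y)` have the same `ℤⁿ`-component, and their
`A`-components differ by `(1 - T^{2^{k-1}}) ⋯ (1 - T²)(1 - T)` applied to `(X - 1) b - (Y - 1) a`,
where `x = a X`, `y = b Y` and `T = XY`. On `T_n`, `X - 1` and `Y - 1` are `0` or some `εᵢ`;
they square to zero and commute, and then `(1 - T²)(1 - T)` already kills them, so `M_c` holds
for `c ≥ 3`. For `X = Y = (t₁ ⋯ tₙ)ᵉ`, each of the `n` operators `X - 1` and `1 - T^{2^i}`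
(`i < n - 1`) raises the degree by exactly one while keeping the leading coefficients nonzero
and of one sign, so the coefficient of `ε₁ ⋯ εₙ` survives and `M_n` fails.
-/

theorem malcevPair_zero {G : Type*} [Monoid G] (x y : G) : malcevPair 0 x y = (x, y) := rfl

theorem malcevPair_succ {G : Type*} [Monoid G] (c : ℕ) (x y : G) :
    malcevPair (c + 1) x y =
      ((malcevPair c x y).1 * (malcevPair c x y).2, (malcevPair c x y).2 * (malcevPair c x y).1) :=
  rfl

theorem malcevPair_map {G H F : Type*} [Monoid G] [Monoid H] [FunLike F G H]
    [MonoidHomClass F G H] (f : F) (c : ℕ) (x y : G) :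
    malcevPair c (f x) (f y) = Prod.map f f (malcevPair c x y) := by
  induction c with
  | zero => rfl
  | succ c ih => simp [malcevPair_succ, ih]

theorem malcevPair_succ_of_comm {G : Type*} [CommMonoid G] (c : ℕ) (x y : G) :
    malcevPair (c + 1) x y = ((x * y) ^ 2 ^ c, (x * y) ^ 2 ^ c) := by
  induction c with
  | zero => simp [malcevPair, mul_comm]
  | succ c ih => rw [malcevPair_succ, ih, ← pow_add, ← two_mul, ← pow_succ']

/-- In a semidirect product with abelian factors, `malcevOp T k` carries `α₁ - β₁` to
`α_{k+1} - β_{k+1}` (see `SemidirectProduct.malcevPair_left_sub`). -/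
def malcevOp {R : Type*} [Ring R] (T : R) : ℕ → R
  | 0 => 1
  | j + 1 => (1 - T ^ 2 ^ j) * malcevOp T j

theorem malcevOp_mul_eq_zero {R : Type*} [Ring R] {P Q : R} (hP : P * P = 0) (hQ : Q * Q = 0)
    (hPQ : Commute P Q) {j : ℕ} (hj : 2 ≤ j) : malcevOp ((1 + P) * (1 + Q)) j * P = 0 := by
  induction j, hj using Nat.le_induction with
  | base =>
    set D := P + Q + P * Q with hD
    have hPQP : P * (Q * P) = 0 := by rw [← hPQ.eq, ← mul_assoc, hP, zero_mul]
    have hQQP : Q * (Q * P) = 0 := by rw [← mul_assoc, hQ, zero_mul]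
    have hDP : D * P = Q * P := by
      rw [hD, add_mul, add_mul, hP, mul_assoc, hPQP, zero_add, add_zero]
    have hDDP : D * (D * P) = 0 := by
      rw [hDP, hD, add_mul, add_mul, hPQP, hQQP, mul_assoc, hQQP, mul_zero, add_zero, add_zero]
    have hT : (1 + P) * (1 + Q) = 1 + D := by rw [hD]; noncomm_ring
    calc malcevOp ((1 + P) * (1 + Q)) 2 * P = (2 + D) * (D * (D * P)) := by
          simp only [malcevOp, hT, pow_zero, pow_one, mul_one, sq]; noncomm_ring
      _ = 0 := by rw [hDDP, mul_zero]
  | succ j _ ih => rw [malcevOp, mul_assoc, ih, mul_zero]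

theorem zsmul_mul_zsmul_of_mul_self_eq_zero {R : Type*} [Ring R] {N : R} (hN : N * N = 0)
    (a b : ℤ) : a • N * (b • N) = 0 := by
  rw [smul_mul_smul_comm, hN, smul_zero]

def sqZeroUnitsHom {R : Type*} [Ring R] {N : R} (hN : N * N = 0) : Multiplicative ℤ →* Rˣ where
  toFun m :=
    { val := 1 + m.toAdd • N
      inv := 1 - m.toAdd • N
      val_inv := by
        rw [mul_sub, add_mul, add_mul, zsmul_mul_zsmul_of_mul_self_eq_zero hN]; noncomm_ring
      inv_val := by
        rw [mul_add, sub_mul, sub_mul, zsmul_mul_zsmul_of_mul_self_eq_zero hN]; noncomm_ring }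
  map_one' := by ext; simp
  map_mul' a b := by
    ext
    simp only [toAdd_mul, add_smul, Units.val_mul, add_mul, mul_add, one_mul, mul_one,
      zsmul_mul_zsmul_of_mul_self_eq_zero hN, add_zero]
    abel

theorem commute_sqZeroUnitsHom {R : Type*} [Ring R] {N N' : R} {hN : N * N = 0}
    {hN' : N' * N' = 0} (h : Commute N N') (a b : Multiplicative ℤ) :
    Commute (sqZeroUnitsHom hN a) (sqZeroUnitsHom hN' b) :=
  Commute.units_of_val <| (Commute.one_left _).add_left <|
    (Commute.one_right _).add_right ((h.smul_left _).smul_right _)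

def Module.End.unitsToMulAut {M : Type*} [AddCommGroup M] :
    (Module.End ℤ M)ˣ →* MulAut (Multiplicative M) where
  toFun u := AddEquiv.toMultiplicative (LinearMap.GeneralLinearGroup.toLinearEquiv u).toAddEquiv
  map_one' := rfl
  map_mul' _ _ := rfl

theorem Module.End.toAdd_unitsToMulAut_apply {M : Type*} [AddCommGroup M]
    (u : (Module.End ℤ M)ˣ) (x : Multiplicative M) :
    (unitsToMulAut u x).toAdd = (u : Module.End ℤ M) x.toAdd :=
  rfl

namespace SemidirectProduct

open scoped commutatorElement

section Group

variable {N G : Type*} [Group N] [Group G] {φ : G →* MulAut N}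

theorem ker_rightHom_inf_range_inr : (rightHom : N ⋊[φ] G →* G).ker ⊓ inr.range = ⊥ := by
  refine eq_bot_iff.mpr fun x ⟨hker, g, hg⟩ => ?_
  subst hg
  simp_all

theorem range_inl_sup_range_inr : (inl : N →* N ⋊[φ] G).range ⊔ inr.range = ⊤ :=
  eq_top_iff.mpr fun x _ => inl_left_mul_inr_right x ▸
    mul_mem (Subgroup.mem_sup_left ⟨_, rfl⟩) (Subgroup.mem_sup_right ⟨_, rfl⟩)

theorem ker_rightHom_sup_range_inr : (rightHom : N ⋊[φ] G →* G).ker ⊔ inr.range = ⊤ := by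
  rw [← range_inl_eq_ker_rightHom, range_inl_sup_range_inr]

instance instFG [Group.FG N] [Group.FG G] : Group.FG (N ⋊[φ] G) := by
  obtain ⟨S, hS, hSfin⟩ := Group.fg_iff.mp ‹Group.FG N›
  obtain ⟨T, hT, hTfin⟩ := Group.fg_iff.mp ‹Group.FG G›
  refine Group.fg_iff.mpr ⟨inl '' S ∪ inr '' T, ?_, (hSfin.image _).union (hTfin.image _)⟩
  rw [Subgroup.closure_union, ← MonoidHom.map_closure, ← MonoidHom.map_closure, hS, hT,
    ← MonoidHom.range_eq_map, ← MonoidHom.range_eq_map, range_inl_sup_range_inr]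

theorem not_isOfFinOrder (hN : ∀ a : N, a ≠ 1 → ¬IsOfFinOrder a)
    (hG : ∀ g : G, g ≠ 1 → ¬IsOfFinOrder g) (x : N ⋊[φ] G) (hx : x ≠ 1) : ¬IsOfFinOrder x := by
  intro hfin
  have hright : x.right = 1 := by_contra fun h => hG _ h (rightHom.isOfFinOrder hfin)
  have hx_eq : inl x.left = x := by ext <;> simp [hright]
  have hleft : x.left = 1 := by_contra fun h =>
    hN _ h ((inl_injective.isOfFinOrder_iff (f := (inl : N →* N ⋊[φ] G))).mp (hx_eq ▸ hfin))
  exact hx (by rw [← hx_eq, hleft, map_one])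

end Group

theorem commute_of_mem_ker_rightHom {N G : Type*} [CommGroup N] [Group G] {φ : G →* MulAut N}
    {x y : N ⋊[φ] G} (hx : x ∈ rightHom.ker) (hy : y ∈ rightHom.ker) : Commute x y := by
  rw [← range_inl_eq_ker_rightHom] at hx hy
  obtain ⟨a, rfl⟩ := hx
  obtain ⟨b, rfl⟩ := hy
  exact (Commute.all a b).map inl

theorem commute_of_mem_range_inr {N G : Type*} [Group N] [CommGroup G] {φ : G →* MulAut N}
    {x y : N ⋊[φ] G} (hx : x ∈ inr.range) (hy : y ∈ inr.range) : Commute x y := by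
  obtain ⟨a, rfl⟩ := hx
  obtain ⟨b, rfl⟩ := hy
  exact (Commute.all a b).map inr

theorem commutatorElement_inl {N G : Type*} [CommGroup N] [Group G] {φ : G →* MulAut N} (a : N)
    (x : N ⋊[φ] G) : ⁅(inl a : N ⋊[φ] G), x⁆ = inl (a / φ x.right a) := by
  ext
  · simp [commutatorElement_def, div_eq_mul_inv]
    rw [mul_right_comm a, mul_inv_cancel_right]
  · simp [commutatorElement_def, div_eq_mul_inv]

theorem isNilpotent_of_filtration {N G : Type*} [CommGroup N] [CommGroup G] {φ : G →* MulAut N}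
    (F : ℕ → Subgroup N) (m : ℕ) (hF0 : F 0 = ⊤) (hFm : F m = ⊥)
    (hF : ∀ j g, ∀ a ∈ F j, a / φ g a ∈ F (j + 1)) : Group.IsNilpotent (N ⋊[φ] G) := by
  have key : ∀ j, (⊤ : Subgroup (N ⋊[φ] G)).lowerCentralSeries (j + 1) ≤ (F j).map inl := by
    intro j
    induction j with
    | zero =>
      rw [hF0, ← MonoidHom.range_eq_map, range_inl_eq_ker_rightHom,
        Subgroup.top_lowerCentralSeries_one]
      exact Abelianization.commutator_subset_ker _
    | succ j ih =>
      rw [Subgroup.lowerCentralSeries_succ]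
      refine Subgroup.commutator_le.mpr fun g hg x _ => ?_
      obtain ⟨a, ha, rfl⟩ := ih hg
      rw [commutatorElement_inl]
      exact Subgroup.mem_map_of_mem _ (hF j _ a ha)
  rw [Subgroup.nilpotent_iff_lowerCentralSeries]
  exact ⟨m + 1, eq_bot_iff.mpr ((key m).trans (by rw [hFm, Subgroup.map_bot]))⟩

section Malcev

variable {M H : Type*} [AddCommGroup M] [CommGroup H] {ρ : H →* (Module.End ℤ M)ˣ}

local notation "G" => Multiplicative M ⋊[Module.End.unitsToMulAut.comp ρ] H

theorem mul_left_toAdd (x y : G) :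
    (x * y).left.toAdd = x.left.toAdd + (ρ x.right : Module.End ℤ M) y.left.toAdd :=
  rfl

theorem malcevPair_right (c : ℕ) (x y : G) :
    (malcevPair (c + 1) x y).1.right = (x.right * y.right) ^ 2 ^ c ∧
      (malcevPair (c + 1) x y).2.right = (x.right * y.right) ^ 2 ^ c := by
  have h := malcevPair_map (rightHom : G →* H) (c + 1) x y
  rw [malcevPair_succ_of_comm] at h
  exact ⟨(congrArg Prod.fst h).symm, (congrArg Prod.snd h).symm⟩

theorem malcevPair_left_sub (c : ℕ) (x y : G) :
    (malcevPair (c + 1) x y).1.left.toAdd - (malcevPair (c + 1) x y).2.left.toAdd =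
      malcevOp (ρ (x.right * y.right) : Module.End ℤ M) c
        (((ρ x.right : Module.End ℤ M) - 1) y.left.toAdd -
          ((ρ y.right : Module.End ℤ M) - 1) x.left.toAdd) := by
  induction c with
  | zero =>
    simp only [malcevPair_succ, malcevPair_zero, mul_left_toAdd, malcevOp, LinearMap.sub_apply,
      Module.End.one_apply]
    abel
  | succ c ih =>
    obtain ⟨hα, hβ⟩ := malcevPair_right c x y
    rw [malcevPair_succ (c + 1), mul_left_toAdd, mul_left_toAdd, hα, hβ, malcevOp,
      Module.End.mul_apply, ← ih, map_pow, Units.val_pow_eq_pow_val]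
    simp only [LinearMap.sub_apply, Module.End.one_apply, map_sub]
    abel

theorem malcevAlpha_eq_malcevBeta_iff (c : ℕ) (x y : G) :
    malcevAlpha (c + 1) x y = malcevBeta (c + 1) x y ↔
      malcevOp (ρ (x.right * y.right) : Module.End ℤ M) c
        (((ρ x.right : Module.End ℤ M) - 1) y.left.toAdd -
          ((ρ y.right : Module.End ℤ M) - 1) x.left.toAdd) = 0 := by
  rw [← malcevPair_left_sub, sub_eq_zero, malcevAlpha, malcevBeta, SemidirectProduct.ext_iff,
    (malcevPair_right c x y).1, (malcevPair_right c x y).2, eq_self, and_true]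
  exact Multiplicative.toAdd.injective.eq_iff.symm

theorem malcevAlpha_eq_malcevBeta_of_mul_self_eq_zero {c : ℕ} (hc : 3 ≤ c) {x y : G}
    (hx : ((ρ x.right : Module.End ℤ M) - 1) * ((ρ x.right : Module.End ℤ M) - 1) = 0)
    (hy : ((ρ y.right : Module.End ℤ M) - 1) * ((ρ y.right : Module.End ℤ M) - 1) = 0)
    (hxy : Commute ((ρ x.right : Module.End ℤ M) - 1) ((ρ y.right : Module.End ℤ M) - 1)) :
    malcevAlpha c x y = malcevBeta c x y := by
  obtain ⟨c, rfl⟩ : ∃ k, c = k + 1 := ⟨c - 1, by omega⟩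
  set P := (ρ x.right : Module.End ℤ M) - 1
  set Q := (ρ y.right : Module.End ℤ M) - 1
  have hT : (ρ (x.right * y.right) : Module.End ℤ M) = (1 + P) * (1 + Q) := by
    simp [P, Q]
  have hP : malcevOp (ρ (x.right * y.right) : Module.End ℤ M) c * P = 0 := by
    rw [hT]; exact malcevOp_mul_eq_zero hx hy hxy (by omega)
  have hQ : malcevOp (ρ (x.right * y.right) : Module.End ℤ M) c * Q = 0 := by
    rw [hT, ((Commute.one_left _).add_left ((Commute.one_right P).add_right hxy)).eq]
    exact malcevOp_mul_eq_zero hy hx hxy.symm (by omega)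
  rw [malcevAlpha_eq_malcevBeta_iff, map_sub, ← Module.End.mul_apply, ← Module.End.mul_apply,
    hP, hQ]
  simp

end Malcev

end SemidirectProduct

namespace MalcevCounterexample

open SemidirectProduct

/-- `V n` models `ℤ[ε₁, …, εₙ] / (ε₁², …, εₙ²)`: `f : V n` stands for `∑ S, f S • ∏ i ∈ S, εᵢ`. -/
abbrev V (n : ℕ) := Finset (Fin n) → ℤ

variable {n : ℕ}

def eps (i : Fin n) : Module.End ℤ (V n) where
  toFun f S := if i ∈ S then f (S.erase i) else 0
  map_add' f g := by ext S; by_cases h : i ∈ S <;> simp [h]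
  map_smul' m f := by ext S; by_cases h : i ∈ S <;> simp [h]

theorem eps_apply (i : Fin n) (f : V n) (S : Finset (Fin n)) :
    eps i f S = if i ∈ S then f (S.erase i) else 0 := rfl

theorem eps_mul_self (i : Fin n) : eps i * eps i = 0 := by
  ext f S
  simp [eps_apply]

theorem commute_eps (i j : Fin n) : Commute (eps i) (eps j) := by
  rcases eq_or_ne i j with rfl | hij
  · rfl
  refine LinearMap.ext fun f => funext fun S => ?_
  simp only [Module.End.mul_apply, eps_apply, Finset.mem_erase]
  by_cases hi : i ∈ S <;> by_cases hj : j ∈ S <;>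
    simp [hi, hj, hij, hij.symm, Finset.erase_right_comm]

theorem pairwise_commute_eps :
    Pairwise fun i j : Fin n => ∀ a b : Multiplicative ℤ,
      Commute (sqZeroUnitsHom (eps_mul_self i) a) (sqZeroUnitsHom (eps_mul_self j) b) :=
  fun i j _ _ _ => commute_sqZeroUnitsHom (commute_eps i j) _ _

/-- `act v` is multiplication by `∏ i, (1 + εᵢ) ^ vᵢ = ∏ i, (1 + vᵢ εᵢ)`. -/
def act : (Fin n → Multiplicative ℤ) →* (Module.End ℤ (V n))ˣ :=
  MonoidHom.noncommPiCoprod (fun i => sqZeroUnitsHom (eps_mul_self i)) pairwise_commute_eps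

theorem act_mulSingle (i : Fin n) (m : Multiplicative ℤ) :
    (act (Pi.mulSingle i m) : Module.End ℤ (V n)) = 1 + m.toAdd • eps i := by
  rw [act, MonoidHom.noncommPiCoprod_mulSingle]
  rfl

def degreeGE (j : ℕ) : AddSubgroup (V n) where
  carrier := {f | ∀ S : Finset (Fin n), S.card < j → f S = 0}
  add_mem' hf hg S hS := by simp [hf S hS, hg S hS]
  zero_mem' _ _ := rfl
  neg_mem' hf S hS := by simp [hf S hS]

theorem degreeGE_zero : degreeGE 0 = (⊤ : AddSubgroup (V n)) :=
  eq_top_iff.mpr fun _ _ _ h => absurd h (Nat.not_lt_zero _)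

theorem degreeGE_eq_bot : degreeGE (n + 1) = (⊥ : AddSubgroup (V n)) := by
  refine eq_bot_iff.mpr fun f hf => funext fun S => hf S ?_
  have := S.card_le_univ
  simp only [Fintype.card_fin] at this
  omega

/-- `g` agrees with `1 + ∑ i, c i • εᵢ` up to terms raising the degree by at least two. -/
def HasLinearPart (g : Module.End ℤ (V n)) (c : Fin n → ℤ) : Prop :=
  ∀ j, ∀ f ∈ degreeGE j, ∀ S : Finset (Fin n), S.card ≤ j + 1 →
    g f S = f S + ∑ i ∈ S, c i * f (S.erase i)

namespace HasLinearPart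

variable {g g' : Module.End ℤ (V n)} {c c' : Fin n → ℤ} {j : ℕ} {f : V n}

theorem apply_of_card_le (hg : HasLinearPart g c) (hf : f ∈ degreeGE j) {S : Finset (Fin n)}
    (hS : S.card ≤ j) : g f S = f S := by
  rw [hg j f hf S (by omega), add_eq_left]
  refine Finset.sum_eq_zero fun i hi => ?_
  have := Finset.card_erase_of_mem hi
  have := Finset.card_pos.mpr ⟨i, hi⟩
  rw [hf (S.erase i) (by omega), mul_zero]

theorem apply_mem (hg : HasLinearPart g c) (hf : f ∈ degreeGE j) : g f ∈ degreeGE j :=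
  fun S hS => (hg.apply_of_card_le hf hS.le).trans (hf S hS)

theorem sub_apply_mem (hg : HasLinearPart g c) (hf : f ∈ degreeGE j) :
    f - g f ∈ degreeGE (j + 1) := fun S hS => by
  rw [Pi.sub_apply, hg.apply_of_card_le hf (by omega), sub_self]

theorem mul (hg : HasLinearPart g c) (hg' : HasLinearPart g' c') :
    HasLinearPart (g * g') (c + c') := by
  intro j f hf S hS
  have hlow : ∀ i ∈ S, g' f (S.erase i) = f (S.erase i) := fun i hi =>
    hg'.apply_of_card_le hf (by rw [Finset.card_erase_of_mem hi]; omega)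
  rw [Module.End.mul_apply, hg j _ (hg'.apply_mem hf) S hS, hg' j f hf S hS,
    Finset.sum_congr rfl fun i hi => congrArg (c i * ·) (hlow i hi)]
  simp only [Pi.add_apply, add_mul, Finset.sum_add_distrib]
  ring

end HasLinearPart

theorem hasLinearPart_one : HasLinearPart (1 : Module.End ℤ (V n)) 0 := by
  intro j f _ S _
  simp

theorem hasLinearPart_one_add_zsmul_eps (i : Fin n) (m : ℤ) :
    HasLinearPart (1 + m • eps i) (Pi.single i m) := by
  intro j f _ S _
  simp [eps_apply, Pi.single_apply]

theorem hasLinearPart_act (v : Fin n → Multiplicative ℤ) :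
    HasLinearPart (act v) fun i => (v i).toAdd := by
  have key := Finset.prod_induction (s := Finset.univ) (fun i => Pi.mulSingle i (v i))
    (fun w => HasLinearPart (act w : Module.End ℤ (V n)) fun i => (w i).toAdd)
    (fun a b ha hb => by rw [map_mul, Units.val_mul]; exact ha.mul hb)
    (by rw [map_one, Units.val_one]; exact hasLinearPart_one)
    (fun i _ => by
      rw [act_mulSingle]
      convert hasLinearPart_one_add_zsmul_eps i (v i).toAdd using 1
      funext k
      rcases eq_or_ne k i with rfl | hki <;> simp [*])
  rwa [Finset.univ_prod_mulSingle] at key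

def LeadsAt (j : ℕ) (f : V n) : Prop :=
  f ∈ degreeGE j ∧ ∃ σ : ℤ, ∀ S : Finset (Fin n), S.card = j → 0 < σ * f S

namespace LeadsAt

variable {g : Module.End ℤ (V n)} {c : Fin n → ℤ} {j : ℕ} {f : V n}

theorem neg (h : LeadsAt j f) : LeadsAt j (-f) :=
  let ⟨σ, hσ⟩ := h.2
  ⟨neg_mem h.1, -σ, fun S hS => by simpa using hσ S hS⟩

theorem apply (hg : HasLinearPart g c) (h : LeadsAt j f) : LeadsAt j (g f) :=
  let ⟨σ, hσ⟩ := h.2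
  ⟨hg.apply_mem h.1, σ, fun S hS => by rw [hg.apply_of_card_le h.1 hS.le]; exact hσ S hS⟩

theorem apply_sub (hg : HasLinearPart g c) (hc : ∀ i, 0 < c i) (h : LeadsAt j f) :
    LeadsAt (j + 1) (g f - f) := by
  obtain ⟨σ, hσ⟩ := h.2
  refine ⟨by simpa using neg_mem (hg.sub_apply_mem h.1), σ, fun S hS => ?_⟩
  rw [Pi.sub_apply, hg j f h.1 S hS.le, add_sub_cancel_left, Finset.mul_sum]
  refine Finset.sum_pos (fun i hi => ?_) (Finset.card_pos.mp (by omega))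
  rw [mul_left_comm]
  exact mul_pos (hc i) (hσ _ (by rw [Finset.card_erase_of_mem hi]; omega))

theorem malcevOp_apply {v : Fin n → Multiplicative ℤ} (hv : ∀ i, 0 < (v i).toAdd)
    (h : LeadsAt j f) (k : ℕ) : LeadsAt (j + k) (malcevOp (act v : Module.End ℤ (V n)) k f) := by
  induction k with
  | zero => simpa [malcevOp] using h
  | succ k ih =>
    rw [malcevOp, Module.End.mul_apply, LinearMap.sub_apply, Module.End.one_apply,
      ← Units.val_pow_eq_pow_val, ← map_pow, ← neg_sub, ← add_assoc]
    refine (ih.apply_sub (hasLinearPart_act _) fun i => ?_).neg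
    simpa [toAdd_pow] using hv i

theorem ne_zero (h : LeadsAt n f) : f ≠ 0 := by
  rintro rfl
  obtain ⟨σ, hσ⟩ := h.2
  simpa using hσ Finset.univ (by simp)

end LeadsAt

theorem leadsAt_single_empty : LeadsAt 0 (Pi.single ∅ 1 : V n) :=
  ⟨degreeGE_zero ▸ AddSubgroup.mem_top _, 1, fun S hS => by simp [Finset.card_eq_zero.mp hS]⟩

abbrev Grp (n : ℕ) :=
  Multiplicative (V n) ⋊[Module.End.unitsToMulAut.comp act] (Fin n → Multiplicative ℤ)

theorem isNilpotent_grp : Group.IsNilpotent (Grp n) :=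
  isNilpotent_of_filtration (fun j => (degreeGE j).toSubgroup) (n + 1)
    (by rw [degreeGE_zero, OrderIso.map_top]) (by rw [degreeGE_eq_bot, OrderIso.map_bot])
    fun _ g _ ha => (hasLinearPart_act g).sub_apply_mem ha

theorem not_isOfFinOrder_grp (x : Grp n) (hx : x ≠ 1) : ¬IsOfFinOrder x :=
  SemidirectProduct.not_isOfFinOrder (fun _ => not_isOfFinOrder_of_isMulTorsionFree)
    (fun _ => not_isOfFinOrder_of_isMulTorsionFree) x hx

def gen (i : Fin n) : Grp n := inr (Pi.mulSingle (M := fun _ => Multiplicative ℤ) i (.ofAdd 1))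

theorem closure_range_gen : Subgroup.closure (Set.range (gen (n := n))) = inr.range := by
  have hgen : Subgroup.closure
      (Set.range fun i : Fin n => Pi.mulSingle (M := fun _ => Multiplicative ℤ) i (.ofAdd 1)) =
        ⊤ := by
    refine eq_top_iff.mpr fun v _ => ?_
    rw [← Finset.univ_prod_mulSingle v]
    refine Subgroup.prod_mem _ fun i _ => ?_
    have : Pi.mulSingle i (v i) =
        Pi.mulSingle (M := fun _ => Multiplicative ℤ) i (.ofAdd 1) ^ (v i).toAdd := by
      rw [← Pi.mulSingle_zpow, ← ofAdd_zsmul, smul_eq_mul, mul_one, ofAdd_toAdd]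
    rw [this]
    exact Subgroup.zpow_mem _ (Subgroup.subset_closure (Set.mem_range_self i)) _
  rw [MonoidHom.range_eq_map, ← hgen, MonoidHom.map_closure, ← Set.range_comp]
  rfl

theorem gen_prod_pow (e : ℕ) :
    (List.ofFn (gen (n := n))).prod ^ e = inr fun _ => Multiplicative.ofAdd (e : ℤ) := by
  have h : List.ofFn (gen (n := n)) =
      (List.ofFn fun i => Pi.mulSingle (M := fun _ => Multiplicative ℤ) i (.ofAdd 1)).map inr := by
    rw [List.map_ofFn]; rfl
  rw [h, ← map_list_prod, List.prod_ofFn, Finset.univ_prod_mulSingle, ← map_pow]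
  congr 1
  funext
  simp [← ofAdd_nsmul]

def cosetUnion (n : ℕ) : Set (Grp n) :=
  (⋃ i : Fin n, gen i • ((rightHom : Grp n →* _).ker : Set (Grp n))) ∪ (rightHom : Grp n →* _).ker

theorem act_right_sub_one_mem {x : Grp n} (hx : x ∈ cosetUnion n) :
    (act x.right : Module.End ℤ (V n)) - 1 ∈ insert 0 (Set.range eps) := by
  rcases hx with hx | hx
  · obtain ⟨i, a, ha, rfl⟩ : ∃ i a, a.right = 1 ∧ gen i * a = x := by
      simpa [Set.mem_smul_set] using hx
    refine Or.inr ⟨i, ?_⟩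
    rw [mul_right, ha, mul_one, gen, right_inr, act_mulSingle]
    simp
  · rw [show x.right = 1 from hx]
    simp

theorem mul_self_eq_zero_of_mem {P : Module.End ℤ (V n)} (hP : P ∈ insert 0 (Set.range eps)) :
    P * P = 0 := by
  rcases hP with rfl | ⟨i, rfl⟩
  exacts [mul_zero 0, eps_mul_self i]

theorem commute_of_mem {P Q : Module.End ℤ (V n)} (hP : P ∈ insert 0 (Set.range eps))
    (hQ : Q ∈ insert 0 (Set.range eps)) : Commute P Q := by
  rcases hP with rfl | ⟨i, rfl⟩
  · exact Commute.zero_left Q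
  rcases hQ with rfl | ⟨j, rfl⟩
  exacts [Commute.zero_right _, commute_eps i j]

theorem malcevAlpha_eq_malcevBeta_of_mem {c : ℕ} (hc : 3 ≤ c) {x y : Grp n}
    (hx : x ∈ cosetUnion n) (hy : y ∈ cosetUnion n) : malcevAlpha c x y = malcevBeta c x y :=
  malcevAlpha_eq_malcevBeta_of_mul_self_eq_zero hc
    (mul_self_eq_zero_of_mem (act_right_sub_one_mem hx))
    (mul_self_eq_zero_of_mem (act_right_sub_one_mem hy))
    (commute_of_mem (act_right_sub_one_mem hx) (act_right_sub_one_mem hy))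

theorem malcevAlpha_ne_malcevBeta (hn : 1 ≤ n) {e : ℕ} (he : 1 ≤ e) :
    ∃ x ∈ ((List.ofFn (gen (n := n))).prod ^ e) • ((rightHom : Grp n →* _).ker : Set (Grp n)),
      ∃ y ∈ ((List.ofFn (gen (n := n))).prod ^ e) • ((rightHom : Grp n →* _).ker : Set (Grp n)),
        malcevAlpha n x y ≠ malcevBeta n x y := by
  set w : Fin n → Multiplicative ℤ := fun _ => Multiplicative.ofAdd (e : ℤ)
  have hw : ∀ i, 0 < (w i).toAdd := fun _ => by simp [w]; omega
  have hww : ∀ i, 0 < ((w * w) i).toAdd := fun _ => by simp [w]; omega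
  rw [gen_prod_pow]
  refine ⟨inr w, Set.mem_smul_set.mpr ⟨1, one_mem _, mul_one _⟩,
    inr w * inl (Multiplicative.ofAdd (Pi.single ∅ 1)),
    Set.mem_smul_set.mpr ⟨_, rightHom_inl _, rfl⟩, ?_⟩
  obtain ⟨k, rfl⟩ : ∃ k, n = k + 1 := ⟨n - 1, by omega⟩
  have hlead := ((leadsAt_single_empty.apply (hasLinearPart_act w)).apply_sub
    (hasLinearPart_act w) hw).malcevOp_apply hww k
  rw [show 0 + 1 + k = k + 1 by omega] at hlead
  rw [Ne, malcevAlpha_eq_malcevBeta_iff]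
  convert hlead.ne_zero using 2
  simp [Module.End.toAdd_unitsToMulAut_apply]

end MalcevCounterexample

open MalcevCounterexample SemidirectProduct in
theorem exists_malcev_counterexample_level (c : ℕ) (hc : 3 ≤ c) :
    ∀ n, c ≤ n → Nonempty (MalcevCounterexampleLevel c n) := by
  intro n hn
  exact ⟨{
    G := Grp n
    fg := inferInstance
    nilpotent := isNilpotent_grp
    torsionFree := not_isOfFinOrder_grp
    A := rightHom.ker
    B := inr.range
    normalA := rightHom.normal_ker
    inf_eq_bot := ker_rightHom_inf_range_inr
    sup_eq_top := ker_rightHom_sup_range_inr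
    abelianA := fun x y => Subtype.ext (commute_of_mem_ker_rightHom x.2 y.2).eq
    abelianB := fun x y => Subtype.ext (commute_of_mem_range_inr x.2 y.2).eq
    t := gen
    t_mem := fun _ => ⟨_, rfl⟩
    t_gen := closure_range_gen
    T_satisfies_Mc := fun _ hx _ hy => malcevAlpha_eq_malcevBeta_of_mem hc hx hy
    Mn_fails_on_coset := fun _ he => malcevAlpha_ne_malcevBeta (by omega) he
    not_Mn :=
      let ⟨x, _, y, _, h⟩ := malcevAlpha_ne_malcevBeta (n := n) (by omega) le_rfl
      ⟨x, y, h⟩ }⟩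
end
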